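/- Let H be a bounded self-adjoint operator with σ(H) ⊆ (0,1] on a Hilbert space M, and T = [[I, −√(H⁻¹−I)],[0,0]] on M ⊕ M. Then TT* + T*T − T − T* − I = (H⁻¹ − 2I) ⊕ (H⁻¹ − 2I). -/

import Mathlib

/-!
In block form `T = [[I, -S], [0, 0]]` and `T* = [[I, 0], [-S*, 0]]`; multiplying out gives
`TT* + T*T - T - T* - I = (SS* - I) ⊕ (S*S - I)` for every bounded `S`. When `S` is
self-adjoint with `S² = H⁻¹ - I`, both diagonal blocks equal `H⁻¹ - 2I`.
-/

open ContinuousLinearMap WithLp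

namespace WithLp

variable {𝕜 E F : Type*} [RCLike 𝕜]
  [NormedAddCommGroup E] [InnerProductSpace 𝕜 E] [NormedAddCommGroup F] [InnerProductSpace 𝕜 F]

/-- The idempotent `[[I, -S], [0, 0]]` on `E ⊕ F`. -/
def skewProjection (S : F →L[𝕜] E) : WithLp 2 (E × F) →L[𝕜] WithLp 2 (E × F) :=
  (prodContinuousLinearEquiv 2 𝕜 E F).symm.toContinuousLinearMap ∘L
    (fstL 2 𝕜 E F - S ∘L sndL 2 𝕜 E F).prod 0

variable (S : F →L[𝕜] E)

@[simp]
lemma skewProjection_apply (z : WithLp 2 (E × F)) :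
    skewProjection S z = toLp 2 (z.fst - S z.snd, 0) :=
  rfl

variable [CompleteSpace E] [CompleteSpace F]

lemma adjoint_skewProjection_apply (z : WithLp 2 (E × F)) :
    adjoint (skewProjection S) z = toLp 2 (z.fst, -adjoint S z.fst) := by
  have hadj : (prodContinuousLinearEquiv 2 𝕜 E F).symm.toContinuousLinearMap ∘L
      (fstL 2 𝕜 E F).prod (-adjoint S ∘L fstL 2 𝕜 E F) = adjoint (skewProjection S) := by
    rw [eq_adjoint_iff]
    intro x y
    simp [adjoint_inner_left, sub_eq_add_neg, inner_add_right]
  exact (DFunLike.congr_fun hadj z).symm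

lemma skewProjection_buckholtz_apply (z : WithLp 2 (E × F)) :
    (skewProjection S * adjoint (skewProjection S) + adjoint (skewProjection S) * skewProjection S
        - skewProjection S - adjoint (skewProjection S) - 1) z =
      toLp 2 ((S ∘L adjoint S - 1) z.fst, (adjoint S ∘L S - 1) z.snd) := by
  simp only [sub_apply, add_apply, mul_apply_eq_comp, one_apply_eq_self,
    adjoint_skewProjection_apply, skewProjection_apply]
  refine ofLp_injective 2 (Prod.ext ?_ ?_) <;> simp

end WithLp

theorem block_skew_projection_buckholtz_general
    {M : Type*} [NormedAddCommGroup M] [InnerProductSpace ℂ M] [CompleteSpace M]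
    (Hinv : M →L[ℂ] M)
    (S : M →L[ℂ] M) (hS : S.IsPositive) (hS2 : S * S = Hinv - 1)
    (T : WithLp 2 (M × M) →L[ℂ] WithLp 2 (M × M))
    (hT : ∀ z : WithLp 2 (M × M),
      T z = (WithLp.equiv 2 (M × M)).symm
        ((WithLp.equiv 2 (M × M) z).1 - S ((WithLp.equiv 2 (M × M) z).2), 0)) :
    ∀ z : WithLp 2 (M × M),
      (T * adjoint T + adjoint T * T - T - adjoint T - 1) z =
        (WithLp.equiv 2 (M × M)).symm
          ((Hinv - 2 • (1 : M →L[ℂ] M)) ((WithLp.equiv 2 (M × M) z).1),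
           (Hinv - 2 • (1 : M →L[ℂ] M)) ((WithLp.equiv 2 (M × M) z).2)) := by
  intro z
  have hT_eq : T = skewProjection S := ext hT
  have hS_adj : adjoint S = S := hS.isSelfAdjoint.adjoint_eq
  have hS_sq : S ∘L S - 1 = Hinv - 2 • (1 : M →L[ℂ] M) := by
    rw [← mul_def, hS2, two_smul, sub_sub]
  rw [hT_eq, skewProjection_buckholtz_apply, hS_adj, hS_sq]
  rfl

open ContinuousLinearMap in
/-- Let `H` be a bounded self-adjoint operator with `σ(H) ⊆ (0,1]` on a complex Hilbert
space `M`, let `S = √(H⁻¹ − I)` and `T = [[I, −S],[0,0]]` on `M ⊕ M` (ℓ² direct sum).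
Then `TT* + T*T − T − T* − I = (H⁻¹ − 2I) ⊕ (H⁻¹ − 2I)`. -/
theorem block_skew_projection_buckholtz
    {M : Type*} [NormedAddCommGroup M] [InnerProductSpace ℂ M] [CompleteSpace M]
    (H : M →L[ℂ] M) (hH : IsSelfAdjoint H)
    (hσ : spectrum ℂ H ⊆ (fun r : ℝ => (r : ℂ)) '' Set.Ioc 0 1)
    (Hinv : M →L[ℂ] M) (hHinv : H * Hinv = 1 ∧ Hinv * H = 1)
    (S : M →L[ℂ] M) (hS : S.IsPositive) (hS2 : S * S = Hinv - 1)
    (T : WithLp 2 (M × M) →L[ℂ] WithLp 2 (M × M))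
    (hT : ∀ z : WithLp 2 (M × M),
      T z = (WithLp.equiv 2 (M × M)).symm
        ((WithLp.equiv 2 (M × M) z).1 - S ((WithLp.equiv 2 (M × M) z).2), 0)) :
    ∀ z : WithLp 2 (M × M),
      (T * adjoint T + adjoint T * T - T - adjoint T - 1) z =
        (WithLp.equiv 2 (M × M)).symm
          ((Hinv - 2 • (1 : M →L[ℂ] M)) ((WithLp.equiv 2 (M × M) z).1),
           (Hinv - 2 • (1 : M →L[ℂ] M)) ((WithLp.equiv 2 (M × M) z).2)) :=
  block_skew_projection_buckholtz_general Hinv S hS hS2 T hT
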